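/- Let d ≥ 2, α ∈ (0,1), let D ⊂ ℝ^d be nonempty, open, bounded and strictly convex, let γ ∈ (α, 1] and K > 0, and let φ : closure(D) → ℝ be twice continuously differentiable on D and γ-Hölder on closure(D), i.e. |φ(u) − φ(v)| ≤ K|u−v|^γ for all u, v ∈ closure(D). Then sup_{x ∈ D} |𝓛φ(x)| < ∞. -/

import Mathlib

open MeasureTheory Metric Set Bornology
open scoped RealInnerProductSpace

noncomputable section

/-- `lamT D y z` is the largest `t ∈ [0,1]` such that `y + t • (z - y) ∈ closure D`. -/
def lamT {d : ℕ} (D : Set (EuclideanSpace ℝ (Fin d)))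
    (y z : EuclideanSpace ℝ (Fin d)) : ℝ :=
  sSup {t : ℝ | t ∈ Set.Icc (0 : ℝ) 1 ∧ y + t • (z - y) ∈ closure D}

/-- The cutoff map `Λ`. -/
def Lam {d : ℕ} (D : Set (EuclideanSpace ℝ (Fin d)))
    (y z : EuclideanSpace ℝ (Fin d)) : EuclideanSpace ℝ (Fin d) :=
  y + lamT D y z • (z - y)

/-- The fractional operator `𝓛φ(x)` with truncation level `a` in the gradient term. -/
def Lgen {d : ℕ} (D : Set (EuclideanSpace ℝ (Fin d))) (α a : ℝ)
    (φ : EuclideanSpace ℝ (Fin d) → ℝ) (x : EuclideanSpace ℝ (Fin d)) : ℝ :=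
  ∫ z : EuclideanSpace ℝ (Fin d),
    (φ (Lam D x (x + z)) - φ x - (if ‖z‖ < a then ⟪z, gradient φ x⟫ else 0))
      * ‖z‖ ^ (-(d : ℝ) - α)

/-!
Since `α < 1`, the compensator `z ↦ 1_{‖z‖<1} ⟪z, ∇φ(x)⟫ ‖z‖^(-d-α)` is integrable, and being odd
it integrates to zero, so `𝓛φ(x) = ∫ (φ(Λ(x, x+z)) - φ(x)) ‖z‖^(-d-α) dz` whatever `∇φ(x)` is.
The point `Λ(x, x+z)` lies in `closure D` within `min ‖z‖ (diam D)` of `x`, so Hölder continuity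
bounds the integrand by `K min(‖z‖, diam D)^γ ‖z‖^(-d-α)`. This majorant does not depend on `x`,
and it is integrable: near `0` because `γ > α`, at infinity because `α > 0`.
-/

open Real Module

section Cutoff

variable {d : ℕ} {D : Set (EuclideanSpace ℝ (Fin d))} {x z : EuclideanSpace ℝ (Fin d)}

lemma lamT_mem (hx : x ∈ closure D) (z : EuclideanSpace ℝ (Fin d)) :
    lamT D x z ∈ {t : ℝ | t ∈ Icc (0 : ℝ) 1 ∧ x + t • (z - x) ∈ closure D} := by
  refine IsClosed.csSup_mem (isClosed_Icc.inter (isClosed_closure.preimage (by fun_prop)))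
    ⟨0, ⟨le_rfl, zero_le_one⟩, by simpa using hx⟩ ⟨1, fun _ ht => ht.1.2⟩

lemma Lam_mem_closure (hx : x ∈ closure D) : Lam D x z ∈ closure D :=
  (lamT_mem hx z).2

lemma norm_Lam_sub_le (hx : x ∈ closure D) : ‖Lam D x z - x‖ ≤ ‖z - x‖ := by
  obtain ⟨⟨h0, h1⟩, -⟩ := lamT_mem hx z
  rw [Lam, add_sub_cancel_left, norm_smul, Real.norm_of_nonneg h0]
  exact mul_le_of_le_one_left (norm_nonneg _) h1

lemma le_lamT_iff (hconv : Convex ℝ D) (hx : x ∈ closure D) {c : ℝ} (hc : 0 < c) (hc1 : c ≤ 1) :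
    c ≤ lamT D x z ↔ x + c • (z - x) ∈ closure D := by
  refine ⟨fun hcz => ?_, fun h => le_csSup ⟨1, fun _ ht => ht.1.2⟩ ⟨⟨hc.le, hc1⟩, h⟩⟩
  have ht : 0 < lamT D x z := hc.trans_le hcz
  have key := hconv.closure.add_smul_sub_mem hx (Lam_mem_closure (z := z) hx)
    ⟨div_nonneg hc.le ht.le, div_le_one_of_le₀ hcz ht.le⟩
  rwa [Lam, add_sub_cancel_left, smul_smul, div_mul_cancel₀ _ ht.ne'] at key

lemma measurable_lamT (hconv : Convex ℝ D) (hx : x ∈ closure D) : Measurable (lamT D x) := by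
  refine measurable_of_Ici fun c => ?_
  rcases le_or_gt c 0 with hc | hc
  · convert MeasurableSet.univ
    exact eq_univ_of_forall fun z => hc.trans (lamT_mem hx z).1.1
  rcases le_or_gt c 1 with hc1 | hc1
  · have : lamT D x ⁻¹' Ici c = {z | x + c • (z - x) ∈ closure D} :=
      Set.ext fun z => le_lamT_iff hconv hx hc hc1
    rw [this]
    exact (isClosed_closure.preimage (by fun_prop)).measurableSet
  · convert MeasurableSet.empty
    exact eq_empty_of_forall_notMem fun z hz => (hc1.trans_le hz).not_ge (lamT_mem hx z).1.2

lemma measurable_Lam (hconv : Convex ℝ D) (hx : x ∈ closure D) : Measurable (Lam D x) :=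
  measurable_const.add ((measurable_lamT hconv hx).smul (measurable_id.sub_const x))

end Cutoff

lemma holderOnWith_toNNReal_of_abs_sub_le {E : Type*} [SeminormedAddCommGroup E] {s : Set E}
    {f : E → ℝ} {K γ : ℝ} (hγ : 0 ≤ γ)
    (h : ∀ u ∈ s, ∀ v ∈ s, |f u - f v| ≤ K * ‖u - v‖ ^ γ) :
    HolderOnWith K.toNNReal γ.toNNReal f s := by
  intro u hu v hv
  have huv : dist (f u) (f v) ≤ K.toNNReal * dist u v ^ γ := by
    rw [Real.dist_eq, dist_eq_norm]
    exact (h u hu v hv).trans (by gcongr; exact Real.le_coe_toNNReal K)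
  rw [edist_dist, edist_dist, Real.coe_toNNReal γ hγ, ENNReal.ofReal_rpow_of_nonneg dist_nonneg hγ,
    ← ENNReal.ofReal_coe_nnreal, ← ENNReal.ofReal_mul (by positivity)]
  exact ENNReal.ofReal_le_ofReal huv

lemma ContinuousOn.measurable_comp_of_forall_mem {α X Y : Type*} [MeasurableSpace α]
    [TopologicalSpace X] [MeasurableSpace X] [OpensMeasurableSpace X]
    [TopologicalSpace Y] [MeasurableSpace Y] [BorelSpace Y]
    {f : X → Y} {s : Set X} {g : α → X} (hf : ContinuousOn f s) (hg : Measurable g)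
    (hgs : ∀ a, g a ∈ s) : Measurable fun a => f (g a) :=
  (continuousOn_iff_continuous_domRestrict.1 hf).measurable.comp (hg.subtype_mk (h := hgs))

lemma integral_eq_zero_of_odd {G F : Type*} [MeasurableSpace G] [AddGroup G] [MeasurableNeg G]
    [NormedAddCommGroup F] [NormedSpace ℝ F] {μ : Measure G} [μ.IsNegInvariant] {f : G → F}
    (hf : ∀ z, f (-z) = -f z) : ∫ z, f z ∂μ = 0 := by
  have h := integral_neg_eq_self f μ
  simp only [hf, integral_neg] at h
  have h2 : (2 : ℝ) • ∫ z, f z ∂μ = 0 := by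
    rw [two_smul]
    nth_rewrite 1 [← h]
    exact neg_add_cancel _
  exact (smul_eq_zero.1 h2).resolve_left two_ne_zero

section NormPower

variable {E : Type*} [NormedAddCommGroup E] [NormedSpace ℝ E] [FiniteDimensional ℝ E]
  [MeasurableSpace E] [BorelSpace E] {μ : Measure E} [μ.IsAddHaarMeasure]

lemma integrableOn_compl_ball_norm_rpow {β : ℝ} (hβ : finrank ℝ E < β) :
    IntegrableOn (fun z : E => ‖z‖ ^ (-β)) (ball 0 1)ᶜ μ := by
  have hβ0 : 0 ≤ β := by linarith [(finrank ℝ E).cast_nonneg (α := ℝ)]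
  refine ((integrable_one_add_norm hβ).const_mul (2 ^ β)).integrableOn.mono'
    (by fun_prop : Measurable _).aestronglyMeasurable
    (ae_restrict_of_forall_mem measurableSet_ball.compl fun z hz => ?_)
  have hz : 1 ≤ ‖z‖ := by simpa using hz
  rw [Real.norm_of_nonneg (by positivity)]
  calc ‖z‖ ^ (-β) ≤ ((1 + ‖z‖) / 2) ^ (-β) :=
        rpow_le_rpow_of_nonpos (by positivity) (by linarith) (neg_nonpos.2 hβ0)
    _ = 2 ^ β * (1 + ‖z‖) ^ (-β) := by
        rw [div_rpow (by positivity) zero_le_two, rpow_neg zero_le_two, div_inv_eq_mul, mul_comm]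

lemma integrable_min_norm_rpow_mul_norm_rpow (hd : 1 ≤ finrank ℝ E) {R γ β : ℝ} (hR : 0 ≤ R)
    (hγ : 0 ≤ γ) (hβ : finrank ℝ E < β) (hβγ : β - γ < finrank ℝ E) :
    Integrable (fun z : E => min ‖z‖ R ^ γ * ‖z‖ ^ (-β)) μ := by
  have hβ0 : 0 < β := by linarith [(finrank ℝ E).cast_nonneg (α := ℝ)]
  have hmeas : AEStronglyMeasurable (fun z : E => min ‖z‖ R ^ γ * ‖z‖ ^ (-β)) μ :=
    (by fun_prop : Measurable _).aestronglyMeasurable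
  rw [← integrableOn_univ, ← union_compl_self (ball (0 : E) 1)]
  refine IntegrableOn.union
    (integrableOn_ball_of_norm_le_rpow hd hβγ (C := 1) (ae_of_all _ fun z => ?_) hmeas)
    (((integrableOn_compl_ball_norm_rpow hβ).const_mul (R ^ γ)).mono' hmeas.restrict
      (ae_of_all _ fun z => ?_))
  · rcases eq_or_ne z 0 with rfl | hz
    · simp [zero_rpow (neg_ne_zero.2 hβ0.ne'), rpow_nonneg]
    rw [Real.norm_of_nonneg (by positivity), one_mul, neg_sub, sub_eq_add_neg,
      rpow_add (norm_pos_iff.2 hz)]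
    gcongr
    exact min_le_left _ _
  · rw [Real.norm_of_nonneg (by positivity)]
    gcongr
    exact min_le_right _ _

end NormPower

section Compensator

variable {E : Type*} [NormedAddCommGroup E] [InnerProductSpace ℝ E] [MeasurableSpace E]
  [BorelSpace E] {μ : Measure E}

lemma integral_ite_inner_mul_norm_rpow_eq_zero [μ.IsNegInvariant] (a p : ℝ) (v : E) :
    ∫ z, (if ‖z‖ < a then ⟪z, v⟫ else 0) * ‖z‖ ^ p ∂μ = 0 :=
  integral_eq_zero_of_odd fun z => by
    by_cases hz : ‖z‖ < a <;> simp [hz, inner_neg_left]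

variable [FiniteDimensional ℝ E] [μ.IsAddHaarMeasure]

lemma integrable_ite_inner_mul_norm_rpow (hd : 1 ≤ finrank ℝ E) {p : ℝ}
    (hp : -(finrank ℝ E : ℝ) - 1 < p) (a : ℝ) (v : E) :
    Integrable (fun z : E => (if ‖z‖ < a then ⟪z, v⟫ else 0) * ‖z‖ ^ p) μ := by
  have hind : (fun z : E => (if ‖z‖ < a then ⟪z, v⟫ else 0) * ‖z‖ ^ p) =
      (ball 0 a).indicator fun z => ⟪z, v⟫ * ‖z‖ ^ p := by
    ext z
    by_cases hz : ‖z‖ < a <;> simp [indicator, hz]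
  rw [hind, integrable_indicator_iff measurableSet_ball]
  refine integrableOn_ball_of_norm_le_rpow hd (C := ‖v‖) (α := -(p + 1)) (by linarith)
    (ae_of_all _ fun z => ?_) (by fun_prop : Measurable _).aestronglyMeasurable
  rcases eq_or_ne z 0 with rfl | hz
  · simp only [inner_zero_left, zero_mul, norm_zero]
    positivity
  calc ‖⟪z, v⟫ * ‖z‖ ^ p‖ = |⟪z, v⟫| * ‖z‖ ^ p := by
        rw [norm_mul, Real.norm_eq_abs, Real.norm_of_nonneg (rpow_nonneg (norm_nonneg z) p)]
    _ ≤ ‖z‖ * ‖v‖ * ‖z‖ ^ p := by gcongr; exact abs_real_inner_le_norm z v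
    _ = ‖v‖ * ‖z‖ ^ (-(-(p + 1))) := by rw [neg_neg, rpow_add_one (norm_ne_zero_iff.2 hz)]; ring

end Compensator

section Estimate

variable {d : ℕ} {D : Set (EuclideanSpace ℝ (Fin d))} {x : EuclideanSpace ℝ (Fin d)}
  {φ : EuclideanSpace ℝ (Fin d) → ℝ} {C r : NNReal}

lemma abs_sub_le_min_rpow (hbd : IsBounded D) (hφ : HolderOnWith C r φ (closure D))
    (hx : x ∈ closure D) (z : EuclideanSpace ℝ (Fin d)) :
    |φ (Lam D x (x + z)) - φ x| ≤ C * min ‖z‖ (diam D) ^ (r : ℝ) := by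
  refine hφ.dist_le_of_le (Lam_mem_closure hx) hx (le_min ?_ ?_)
  · simpa [dist_eq_norm] using norm_Lam_sub_le (z := x + z) hx
  · rw [← diam_closure]
    exact dist_le_diam_of_mem hbd.closure (Lam_mem_closure hx) hx

lemma abs_Lgen_le (hd : 1 ≤ d) {α : ℝ} (hα : 0 < α) (hα1 : α < 1) (hconv : Convex ℝ D)
    (hbd : IsBounded D) (hφ : HolderOnWith C r φ (closure D)) (hrα : α < r)
    (hx : x ∈ closure D) (a : ℝ) :
    |Lgen D α a φ x| ≤
      ∫ z : EuclideanSpace ℝ (Fin d), C * (min ‖z‖ (diam D) ^ (r : ℝ) * ‖z‖ ^ (-(d : ℝ) - α)) := by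
  have hdim : finrank ℝ (EuclideanSpace ℝ (Fin d)) = d := finrank_euclideanSpace_fin
  have hB : Integrable fun z : EuclideanSpace ℝ (Fin d) =>
      C * (min ‖z‖ (diam D) ^ (r : ℝ) * ‖z‖ ^ (-(d : ℝ) - α)) := by
    have := integrable_min_norm_rpow_mul_norm_rpow (E := EuclideanSpace ℝ (Fin d)) (μ := volume)
      (β := d + α) (by rw [hdim]; omega) (diam_nonneg (s := D)) r.coe_nonneg
      (by rw [hdim]; linarith) (by rw [hdim]; linarith)
    simpa only [neg_add'] using this.const_mul (C : ℝ)
  have hgB : ∀ z : EuclideanSpace ℝ (Fin d),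
      ‖(φ (Lam D x (x + z)) - φ x) * ‖z‖ ^ (-(d : ℝ) - α)‖ ≤
        C * (min ‖z‖ (diam D) ^ (r : ℝ) * ‖z‖ ^ (-(d : ℝ) - α)) := fun z => by
    rw [norm_mul, Real.norm_eq_abs, Real.norm_of_nonneg (by positivity), ← mul_assoc]
    exact mul_le_mul_of_nonneg_right (abs_sub_le_min_rpow hbd hφ hx z) (by positivity)
  have hφm : Measurable fun z => φ (Lam D x (x + z)) :=
    (hφ.continuousOn (hα.trans hrα)).measurable_comp_of_forall_mem
      ((measurable_Lam hconv hx).comp (measurable_const_add x)) fun _ => Lam_mem_closure hx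
  have hg : Integrable fun z : EuclideanSpace ℝ (Fin d) =>
      (φ (Lam D x (x + z)) - φ x) * ‖z‖ ^ (-(d : ℝ) - α) :=
    hB.mono' ((hφm.sub_const _).mul (by fun_prop)).aestronglyMeasurable (ae_of_all _ hgB)
  have hq := integrable_ite_inner_mul_norm_rpow (μ := volume) (by omega)
    (p := -(d : ℝ) - α) (by rw [hdim]; linarith) a (gradient φ x)
  have hsplit : Lgen D α a φ x = (∫ z, (φ (Lam D x (x + z)) - φ x) * ‖z‖ ^ (-(d : ℝ) - α)) -
      ∫ z, (if ‖z‖ < a then ⟪z, gradient φ x⟫ else 0) * ‖z‖ ^ (-(d : ℝ) - α) := by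
    rw [← integral_sub hg hq]
    exact integral_congr_ae (ae_of_all _ fun z => sub_mul _ _ _)
  rw [hsplit, integral_ite_inner_mul_norm_rpow_eq_zero, sub_zero, ← Real.norm_eq_abs]
  exact norm_integral_le_of_norm_le hB (ae_of_all _ hgB)

end Estimate

theorem stmt_4_general (d : ℕ) (hd : 2 ≤ d) (α : ℝ) (hα : α ∈ Set.Ioo (0 : ℝ) 1)
    (D : Set (EuclideanSpace ℝ (Fin d)))
    (hbd : IsBounded D) (hconv : Convex ℝ D)
    (γ K : ℝ) (hγ : γ ∈ Set.Ioc α 1)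
    (φ : EuclideanSpace ℝ (Fin d) → ℝ)
    (hφH : ∀ u ∈ closure D, ∀ v ∈ closure D, |φ u - φ v| ≤ K * ‖u - v‖ ^ γ) :
    ∃ M : ℝ, ∀ x ∈ D, |Lgen D α 1 φ x| ≤ M := by
  have hγ0 : 0 ≤ γ := hα.1.le.trans hγ.1.le
  have hαγ : α < (γ.toNNReal : ℝ) := by rw [Real.coe_toNNReal γ hγ0]; exact hγ.1
  exact ⟨_, fun x hx => abs_Lgen_le (by omega) hα.1 hα.2 hconv hbd
    (holderOnWith_toNNReal_of_abs_sub_le hγ0 hφH) hαγ (subset_closure hx) 1⟩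

/-- for `α ∈ (0,1)`, `D ⊂ ℝ^d` nonempty open bounded strictly convex,
`γ ∈ (α,1]`, `K > 0` and `φ` twice continuously differentiable on `D` and `γ`-Hölder
on `closure D` with constant `K`, the function `𝓛φ` is bounded on `D`. -/
theorem stmt_4 (d : ℕ) (hd : 2 ≤ d) (α : ℝ) (hα : α ∈ Set.Ioo (0 : ℝ) 1)
    (D : Set (EuclideanSpace ℝ (Fin d)))
    (hne : D.Nonempty) (hop : IsOpen D) (hbd : IsBounded D) (hconv : Convex ℝ D)
    (hstrict : ∀ a b : EuclideanSpace ℝ (Fin d), a ≠ b → ¬ segment ℝ a b ⊆ frontier D)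
    (γ K : ℝ) (hγ : γ ∈ Set.Ioc α 1) (hK : 0 < K)
    (φ : EuclideanSpace ℝ (Fin d) → ℝ) (hφ2 : ContDiffOn ℝ 2 φ D)
    (hφH : ∀ u ∈ closure D, ∀ v ∈ closure D, |φ u - φ v| ≤ K * ‖u - v‖ ^ γ) :
    ∃ M : ℝ, ∀ x ∈ D, |Lgen D α 1 φ x| ≤ M :=
  stmt_4_general d hd α hα D hbd hconv γ K hγ φ hφH
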